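/- For every integer n ≥ 1, ∫₀¹ (log(1+x))^n / x dx = −n! · ∑_{k=0}^{n−1} (log^k 2 / k!) · Li_{n+1−k}(1/2) + n! · ζ(n+1) − n · log^{n+1} 2 / (n+1). -/

import Mathlib

open scoped BigOperators

/-- Riemann zeta value `ζ(m) = ∑_{k=1}^∞ 1/k^m`. -/
noncomputable def zeta (m : ℕ) : ℝ := ∑' k : ℕ, 1 / ((k : ℝ) + 1) ^ m

/-- Polylogarithm `Li_m(x) = ∑_{k=1}^∞ x^k/k^m`. -/
noncomputable def Li (m : ℕ) (x : ℝ) : ℝ := ∑' k : ℕ, x ^ (k + 1) / ((k : ℝ) + 1) ^ m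

/-! Substituting `x = eᵗ - 1` turns the integral into `∫₀^L tⁿ eᵗ / (eᵗ - 1) dt` with `L = log 2`.
Expanding `eᵗ / (eᵗ - 1) = ∑_{j ≥ 0} e^{-jt}` and integrating termwise, the term `j = 0` gives
`L^{n+1} / (n+1)`, while for `j ≥ 1` the antiderivative of `tⁿ e^{-jt}` built from the truncated
exponential series gives `n! / j^{n+1} · (1 - e^{-jL} ∑_{k ≤ n} (jL)ᵏ / k!)`. Summing over `j`
produces `n! ζ(n+1)` and the polylogarithms `Li_{n+1-k}(e^{-L})`; the term `k = n` is
`Li₁(1/2) = log 2`, which combines with the term `j = 0`. -/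

open Real Finset MeasureTheory
open scoped Nat

lemma hasDerivAt_sum_range_pow_div_factorial (n : ℕ) (x : ℝ) :
    HasDerivAt (fun x : ℝ => ∑ k ∈ range (n + 1), x ^ k / k !) (∑ k ∈ range n, x ^ k / k !) x := by
  induction n with
  | zero => simpa using hasDerivAt_const x (1 : ℝ)
  | succ n ih =>
    have hterm : HasDerivAt (fun x : ℝ => x ^ (n + 1) / (n + 1)!) (x ^ n / n !) x := by
      refine ((hasDerivAt_pow (n + 1) x).div_const _).congr_deriv ?_
      rw [Nat.factorial_succ]
      push_cast
      field_simp
    simpa only [sum_range_succ] using ih.fun_add hterm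

lemma hasDerivAt_sum_pow_div_factorial_mul_exp_neg (n : ℕ) (x : ℝ) :
    HasDerivAt (fun x : ℝ => (∑ k ∈ range (n + 1), x ^ k / k !) * exp (-x))
      (-(x ^ n / n ! * exp (-x))) x := by
  refine ((hasDerivAt_sum_range_pow_div_factorial n x).mul (hasDerivAt_neg x).exp).congr_deriv ?_
  rw [sum_range_succ]
  ring

lemma integral_pow_mul_exp_neg_mul (n : ℕ) {c : ℝ} (hc : c ≠ 0) (L : ℝ) :
    ∫ t in (0)..L, t ^ n * exp (-(c * t)) =
      n ! / c ^ (n + 1) * (1 - (∑ k ∈ range (n + 1), (c * L) ^ k / k !) * exp (-(c * L))) := by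
  have hderiv (t : ℝ) : HasDerivAt
      (fun t => -(n ! / c ^ (n + 1)) * ((∑ k ∈ range (n + 1), (c * t) ^ k / k !) * exp (-(c * t))))
      (t ^ n * exp (-(c * t))) t := by
    refine (((hasDerivAt_sum_pow_div_factorial_mul_exp_neg n (c * t)).comp t
      ((hasDerivAt_id t).const_mul c)).const_mul _).congr_deriv ?_
    simp only [mul_one, mul_pow]
    field_simp
    ring
  rw [intervalIntegral.integral_eq_sub_of_hasDerivAt (fun t _ => hderiv t)
    (by apply Continuous.intervalIntegrable; fun_prop)]
  have hsum_at_zero : ∑ k ∈ range (n + 1), (c * 0) ^ k / (k ! : ℝ) = 1 := by simp [sum_range_succ']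
  rw [hsum_at_zero, mul_zero, neg_zero, exp_zero]
  ring

lemma hasSum_exp_neg_nat_mul {t : ℝ} (ht : 0 < t) :
    HasSum (fun j : ℕ => exp (-(j * t))) (exp t / (exp t - 1)) := by
  have hgeom := hasSum_geometric_of_lt_one (exp_nonneg (-t)) (exp_lt_one_iff.2 (neg_lt_zero.2 ht))
  have hne : exp t - 1 ≠ 0 := (sub_pos.2 (one_lt_exp_iff.2 ht)).ne'
  convert hgeom using 1
  · ext j
    rw [← exp_nat_mul]
    ring_nf
  · rw [exp_neg]
    field_simp

lemma hasSum_zeta {m : ℕ} (hm : 2 ≤ m) : HasSum (fun k : ℕ => 1 / ((k : ℝ) + 1) ^ m) (zeta m) := by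
  have h := (summable_nat_add_iff 1).2 (summable_one_div_nat_pow.2 hm)
  push_cast at h
  exact h.hasSum

lemma hasSum_Li (m : ℕ) {x : ℝ} (hx : |x| < 1) :
    HasSum (fun k : ℕ => x ^ (k + 1) / ((k : ℝ) + 1) ^ m) (Li m x) := by
  refine Summable.hasSum (Summable.of_norm_bounded
    ((summable_geometric_of_lt_one (abs_nonneg x) hx).mul_left |x|) fun k => ?_)
  rw [norm_div, norm_pow, norm_pow, Real.norm_eq_abs, pow_succ']
  refine div_le_self (by positivity) (one_le_pow₀ ?_)
  rw [Real.norm_of_nonneg (by positivity)]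
  linarith [(k.cast_nonneg : (0:ℝ) ≤ k)]

lemma Li_one {x : ℝ} (hx : |x| < 1) : Li 1 x = -log (1 - x) := by
  simpa [Li] using (hasSum_pow_div_log_of_abs_lt_one hx).tsum_eq

lemma hasSum_integral_pow_mul_exp_neg_succ_mul {n : ℕ} (hn : 1 ≤ n) {L : ℝ} (hL : 0 < L) :
    HasSum (fun j : ℕ => ∫ t in (0)..L, t ^ n * exp (-((j + 1) * t)))
      (n ! * zeta (n + 1) - n ! * ∑ k ∈ range (n + 1), L ^ k / k ! * Li (n + 1 - k) (exp (-L))) := by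
  have hx : |exp (-L)| < 1 := by
    rw [abs_of_pos (exp_pos _)]
    exact exp_lt_one_iff.2 (neg_lt_zero.2 hL)
  have hseries := ((hasSum_zeta (by omega : 2 ≤ n + 1)).mul_left (n ! : ℝ)).sub
    ((hasSum_sum (s := range (n + 1)) fun k _ =>
      (hasSum_Li (n + 1 - k) hx).mul_left (L ^ k / k !)).mul_left (n ! : ℝ))
  refine hseries.congr_fun fun j => ?_
  have hc : (j : ℝ) + 1 ≠ 0 := by positivity
  have hexp : exp (-(((j : ℝ) + 1) * L)) = exp (-L) ^ (j + 1) := by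
    rw [← exp_nat_mul]
    push_cast
    ring_nf
  rw [integral_pow_mul_exp_neg_mul n hc, hexp, mul_sum, mul_sub, sum_mul, mul_sum]
  congr 1
  · field_simp
  · refine sum_congr rfl fun k hk => ?_
    rw [← pow_mul_pow_sub ((j : ℝ) + 1) (mem_range.1 hk).le, mul_pow]
    field_simp

lemma integral_pow_mul_exp_div_exp_sub_one {n : ℕ} (hn : 1 ≤ n) {L : ℝ} (hL : 0 < L) :
    ∫ t in (0)..L, t ^ n * exp t / (exp t - 1) =
      L ^ (n + 1) / (n + 1) + n ! * zeta (n + 1)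
        - n ! * ∑ k ∈ range (n + 1), L ^ k / k ! * Li (n + 1 - k) (exp (-L)) := by
  set F : ℕ → ℝ → ℝ := fun j t => t ^ n * exp (-(j * t))
  have hF_nonneg (j : ℕ) (t : ℝ) (ht : t ∈ Set.Ioc 0 L) : 0 ≤ F j t :=
    mul_nonneg (pow_nonneg ht.1.le n) (exp_nonneg _)
  have hF_int (j : ℕ) : IntegrableOn (F j) (Set.Ioc 0 L) :=
    Continuous.integrableOn_Ioc (by fun_prop)
  have hsum : HasSum (fun j => ∫ t in Set.Ioc 0 L, F j t)
      (L ^ (n + 1) / (n + 1) + (n ! * zeta (n + 1)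
        - n ! * ∑ k ∈ range (n + 1), L ^ k / k ! * Li (n + 1 - k) (exp (-L)))) := by
    have h0 : ∫ t in Set.Ioc 0 L, F 0 t = L ^ (n + 1) / (n + 1) := by
      simp [F, ← intervalIntegral.integral_of_le hL.le, integral_pow]
    rw [← h0]
    refine HasSum.zero_add ((hasSum_integral_pow_mul_exp_neg_succ_mul hn hL).congr_fun fun j => ?_)
    simp [F, ← intervalIntegral.integral_of_le hL.le]
  have hterm (t : ℝ) (ht : t ∈ Set.Ioc 0 L) : t ^ n * exp t / (exp t - 1) = ∑' j, F j t := by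
    rw [mul_div_assoc, ((hasSum_exp_neg_nat_mul ht.1).mul_left (t ^ n)).tsum_eq]
  rw [intervalIntegral.integral_of_le hL.le, setIntegral_congr_fun measurableSet_Ioc hterm,
    ← integral_tsum_of_summable_integral_norm hF_int, hsum.tsum_eq, add_sub_assoc]
  refine hsum.summable.congr fun j => setIntegral_congr_fun measurableSet_Ioc fun t ht => ?_
  exact (Real.norm_of_nonneg (hF_nonneg j t ht)).symm

lemma integral_log_one_add_pow_div (n : ℕ) :
    ∫ x in (0 : ℝ)..1, log (1 + x) ^ n / x = ∫ t in (0)..log 2, t ^ n * exp t / (exp t - 1) := by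
  have hsubst := intervalIntegral.integral_comp_mul_deriv_of_deriv_nonneg
    (g := fun x => log (1 + x) ^ n / x) (a := 0) (b := log 2)
    (by fun_prop) (fun t _ => (hasDerivAt_exp t).sub_const 1) (fun t _ => (exp_pos t).le)
  rw [exp_zero, sub_self, exp_log two_pos, show (2 : ℝ) - 1 = 1 by norm_num] at hsubst
  rw [← hsubst]
  refine intervalIntegral.integral_congr fun t _ => ?_
  simp only [Function.comp, add_sub_cancel, log_exp]
  ring

/-- Proposition 1 (8): the Nielsen–Ramanujan integral
`∫₀¹ log(1+x)^n/x dx = −n! ∑_{k=0}^{n−1} log^k 2/k! · Li_{n+1−k}(1/2) + n!·ζ(n+1)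
  − n·log^{n+1}2/(n+1)`. -/
theorem LI_0_0_n_1 (n : ℕ) (hn : 1 ≤ n) :
    (∫ x in (0:ℝ)..1, Real.log (1 + x) ^ n / x)
      = -(n.factorial : ℝ) *
          (∑ k ∈ Finset.range n, Real.log 2 ^ k / (k.factorial : ℝ) * Li (n + 1 - k) (1 / 2))
        + (n.factorial : ℝ) * zeta (n + 1)
        - (n : ℝ) * Real.log 2 ^ (n + 1) / ((n : ℝ) + 1) := by
  have hhalf : exp (-log 2) = 1 / 2 := by rw [exp_neg, exp_log two_pos, one_div]
  have hLi_one : Li 1 (1 / 2) = log 2 := by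
    rw [Li_one (by norm_num [abs_of_pos]), show (1 : ℝ) - 1 / 2 = (2 : ℝ)⁻¹ by norm_num, log_inv,
      neg_neg]
  rw [integral_log_one_add_pow_div, integral_pow_mul_exp_div_exp_sub_one hn (log_pos one_lt_two),
    hhalf, sum_range_succ, Nat.add_sub_cancel_left, hLi_one]
  field_simp
  ring
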